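/- arXiv:1811.12577 — 3 statements merged into one kernel-verified Lean document; each statement's English description precedes it below -/
import Mathlib

section
/- Let k be a field, (R, 𝔪) a local k-algebra, and 𝔞 an ideal contained in 𝔪. For all natural numbers ℓ and n with n ≥ ℓ + 1, one has (𝔞 + 𝔪^n)^{jc_ℓ} = 𝔞^{jc_ℓ}; consequently 𝔞^{jc_ℓ} = ⋂_{n ≥ 0} (𝔞 + 𝔪^n)^{jc_ℓ}. -/
open PowerSeries

universe u

/-- A "based `ℓ`-jet" on a local `k`-algebra `R` with coefficients in a commutative
`k`-algebra `S` is a `k`-algebra homomorphism `φ : R → S[t]/(t^(ℓ+1))` sending the maximal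
ideal into the image of the ideal `(t)`.  The *`ℓ`-jet closure* `𝔞^{jc_ℓ}` of an ideal
`𝔞 ⊆ 𝔪` is the set of `f ∈ R` killed by every based `ℓ`-jet that kills `𝔞`. -/
def jetClosure (k R : Type u) [Field k] [CommRing R] [Algebra k R] [IsLocalRing R]
    (ℓ : ℕ) (𝔞 : Ideal R) : Set R :=
  {f | ∀ (S : Type u) [CommRing S] [Algebra k S]
    (φ : R →ₐ[k] (Polynomial S ⧸ Ideal.span {(Polynomial.X : Polynomial S) ^ (ℓ + 1)})),
    (∀ m ∈ IsLocalRing.maximalIdeal R, φ m ∈ Ideal.span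
      {Ideal.Quotient.mk (Ideal.span {(Polynomial.X : Polynomial S) ^ (ℓ + 1)}) Polynomial.X}) →
    (∀ a ∈ 𝔞, φ a = 0) → φ f = 0}

/-! A based `ℓ`-jet sends `𝔪` into `(t)`, hence `𝔪ⁿ` into `(tⁿ) = 0` once `n ≥ ℓ + 1`: adding
`𝔪ⁿ` to `𝔞` does not change which jets kill it. -/

theorem Ideal.apply_eq_zero_of_mem_pow {R A F : Type*} [CommRing R] [CommRing A]
    [FunLike F R A] [RingHomClass F R A] (φ : F) {M : Ideal R} {t : A} {n : ℕ}
    (hφ : ∀ m ∈ M, φ m ∈ Ideal.span {t}) (ht : t ^ n = 0) {x : R} (hx : x ∈ M ^ n) :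
    φ x = 0 := by
  have hle : (M ^ n).map φ ≤ Ideal.span {t} ^ n := by
    rw [Ideal.map_pow]
    exact Ideal.pow_right_mono (Ideal.map_le_iff_le_comap.2 hφ) n
  have := hle (Ideal.mem_map_of_mem φ hx)
  rwa [Ideal.span_singleton_pow, ht, Ideal.span_singleton_eq_bot.2 rfl, Ideal.mem_bot] at this

theorem Polynomial.mk_X_pow_eq_zero {S : Type*} [CommRing S] {ℓ n : ℕ} (hn : ℓ + 1 ≤ n) :
    Ideal.Quotient.mk (Ideal.span {(Polynomial.X : Polynomial S) ^ (ℓ + 1)}) Polynomial.X ^ n =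
      0 := by
  rw [← map_pow, Ideal.Quotient.eq_zero_iff_mem, Ideal.mem_span_singleton]
  exact pow_dvd_pow _ hn

section jetClosure

variable {k R : Type u} [Field k] [CommRing R] [Algebra k R] [IsLocalRing R]

theorem jetClosure_mono {ℓ : ℕ} {I J : Ideal R} (hIJ : I ≤ J) :
    jetClosure k R ℓ I ⊆ jetClosure k R ℓ J :=
  fun _ hf S _ _ φ hφ hJ => hf S φ hφ fun a ha => hJ a (hIJ ha)

theorem jetClosure_add_maximalIdeal_pow {ℓ n : ℕ} (hn : ℓ + 1 ≤ n) (𝔞 : Ideal R) :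
    jetClosure k R ℓ (𝔞 + IsLocalRing.maximalIdeal R ^ n) = jetClosure k R ℓ 𝔞 := by
  refine Set.Subset.antisymm ?_ (jetClosure_mono le_sup_left)
  intro f hf S _ _ φ hφ h𝔞
  refine hf S φ hφ fun a ha => ?_
  obtain ⟨b, hb, c, hc, rfl⟩ := Submodule.mem_sup.1 ha
  have hc0 : φ c = 0 :=
    Ideal.apply_eq_zero_of_mem_pow φ hφ (Polynomial.mk_X_pow_eq_zero hn) hc
  rw [map_add, h𝔞 b hb, hc0, add_zero]

theorem jetClosure_eq_iInter_add_maximalIdeal_pow (ℓ : ℕ) (𝔞 : Ideal R) :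
    jetClosure k R ℓ 𝔞 = ⋂ n : ℕ, jetClosure k R ℓ (𝔞 + IsLocalRing.maximalIdeal R ^ n) := by
  refine Set.Subset.antisymm (Set.subset_iInter fun _ => jetClosure_mono le_sup_left) ?_
  rw [← jetClosure_add_maximalIdeal_pow le_rfl 𝔞]
  exact Set.iInter_subset _ (ℓ + 1)

end jetClosure

theorem jetClosure_add_pow_eq_general (k R : Type u) [Field k] [CommRing R] [Algebra k R]
    [IsLocalRing R] (𝔞 : Ideal R) :
    (∀ (ℓ n : ℕ), ℓ + 1 ≤ n →
      jetClosure k R ℓ (𝔞 + IsLocalRing.maximalIdeal R ^ n) = jetClosure k R ℓ 𝔞) ∧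
    ∀ ℓ : ℕ,
      jetClosure k R ℓ 𝔞 = ⋂ (n : ℕ), jetClosure k R ℓ (𝔞 + IsLocalRing.maximalIdeal R ^ n) :=
  ⟨fun _ _ hn => jetClosure_add_maximalIdeal_pow hn 𝔞,
    fun ℓ => jetClosure_eq_iInter_add_maximalIdeal_pow ℓ 𝔞⟩

/-- For an ideal `𝔞 ⊆ 𝔪` of a local `k`-algebra and natural numbers `ℓ, n` with
`n ≥ ℓ + 1`, one has `(𝔞 + 𝔪ⁿ)^{jc_ℓ} = 𝔞^{jc_ℓ}`; consequently
`𝔞^{jc_ℓ} = ⋂ₙ (𝔞 + 𝔪ⁿ)^{jc_ℓ}`. -/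
theorem jetClosure_add_pow_eq (k R : Type u) [Field k] [CommRing R] [Algebra k R]
    [IsLocalRing R] (𝔞 : Ideal R) (h𝔞 : 𝔞 ≤ IsLocalRing.maximalIdeal R) :
    (∀ (ℓ n : ℕ), ℓ + 1 ≤ n →
      jetClosure k R ℓ (𝔞 + IsLocalRing.maximalIdeal R ^ n) = jetClosure k R ℓ 𝔞) ∧
    ∀ ℓ : ℕ,
      jetClosure k R ℓ 𝔞 = ⋂ (n : ℕ), jetClosure k R ℓ (𝔞 + IsLocalRing.maximalIdeal R ^ n) :=
  jetClosure_add_pow_eq_general k R 𝔞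
end

section
/- Let k be a field, (R, 𝔪) a local k-algebra, and 𝔞 an ideal contained in 𝔪. Then 𝔞^ac = ⋂_{n ≥ 0} (𝔞 + 𝔪^n)^ac. -/
open PowerSeries

universe u

/-- A "based arc" on a local `k`-algebra `R` with coefficients in a commutative `k`-algebra `S`
is a `k`-algebra homomorphism `φ : R → S[[t]]` with `φ(𝔪) ⊆ (t)`.  The *arc closure* `𝔞^ac` of
an ideal `𝔞 ⊆ 𝔪` is the set of `f ∈ R` killed by every based arc that kills `𝔞`. -/
def arcClosure (k R : Type u) [Field k] [CommRing R] [Algebra k R] [IsLocalRing R]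
    (𝔞 : Ideal R) : Set R :=
  {f | ∀ (S : Type u) [CommRing S] [Algebra k S] (φ : R →ₐ[k] PowerSeries S),
    (∀ m ∈ IsLocalRing.maximalIdeal R, (constantCoeff : PowerSeries S →+* S) (φ m) = 0) →
    (∀ a ∈ 𝔞, φ a = 0) → φ f = 0}

/-! Only `⋂ₙ (𝔞 + 𝔪ⁿ)^ac ⊆ 𝔞^ac` needs an idea. Given a based arc `φ : R → S⟦t⟧`
killing `𝔞` and an `n`, twist it into the based arc `ψ : R → Q⟦t⟧` with `Q = S[x]/(xⁿ)`,
`ψ(f)(t) = φ(f)(x t)`. Since `φ(𝔪ⁿ) ⊆ (tⁿ)` and the kernel of the twist is exactly `(tⁿ)`,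
`ψ` kills `𝔞 + 𝔪ⁿ`; so `ψ(f) = 0` for `f ∈ (𝔞 + 𝔪ⁿ)^ac`, i.e. `tⁿ ∣ φ(f)`. As `n` is arbitrary,
`φ(f) = 0`. -/

theorem AdjoinRoot.root_X_pow_pow_mul_of_eq_zero_iff {S : Type*} [CommRing S] {n j : ℕ}
    (s : S) : root (Polynomial.X ^ n : Polynomial S) ^ j * of _ s = 0 ↔ n ≤ j ∨ s = 0 := by
  rw [← mk_X, ← mk_C, ← map_pow, ← map_mul, mk_eq_zero]
  refine ⟨fun h => or_iff_not_imp_left.mpr fun hj => ?_, ?_⟩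
  · simpa [Polynomial.coeff_X_pow_mul'] using Polynomial.X_pow_dvd_iff.mp h j (not_le.mp hj)
  · rintro (hj | rfl)
    · exact (pow_dvd_pow _ hj).mul_right _
    · simp

namespace PowerSeries

variable {k S : Type*} [CommRing k] [CommRing S] [Algebra k S]

variable (k) in
noncomputable def twistTrunc (n : ℕ) :
    S⟦X⟧ →ₐ[k] (AdjoinRoot (Polynomial.X ^ n : Polynomial S))⟦X⟧ :=
  ((rescaleAlgHom (AdjoinRoot.root _)).restrictScalars k).comp
    (mapAlgHom (IsScalarTower.toAlgHom k S _))

theorem coeff_twistTrunc (n j : ℕ) (g : S⟦X⟧) :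
    coeff j (twistTrunc k n g) = AdjoinRoot.root _ ^ j * AdjoinRoot.of _ (coeff j g) := by
  rw [twistTrunc, AlgHom.comp_apply, AlgHom.restrictScalars_apply, ← AlgHom.coe_toRingHom,
    coe_rescaleAlgHom, coeff_rescale, mapAlgHom_apply, coeff_map]
  rfl

theorem constantCoeff_twistTrunc (n : ℕ) (g : S⟦X⟧) :
    constantCoeff (twistTrunc k n g) = AdjoinRoot.of _ (constantCoeff g) := by
  simpa using coeff_twistTrunc (k := k) n 0 g

theorem twistTrunc_eq_zero_iff {n : ℕ} {g : S⟦X⟧} : twistTrunc k n g = 0 ↔ X ^ n ∣ g := by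
  simp only [PowerSeries.ext_iff, coeff_twistTrunc, map_zero,
    AdjoinRoot.root_X_pow_pow_mul_of_eq_zero_iff, PowerSeries.X_pow_dvd_iff]
  exact ⟨fun h j hj => (h j).resolve_left (not_le.mpr hj),
    fun h j => (lt_or_ge j n).elim (fun hj => Or.inr (h j hj)) Or.inl⟩

theorem X_pow_dvd_of_mem_pow {R : Type*} [CommRing R] (φ : R →+* S⟦X⟧)
    {I : Ideal R} (hI : ∀ m ∈ I, constantCoeff (φ m) = 0) {n : ℕ} {m : R} (hm : m ∈ I ^ n) :
    X ^ n ∣ φ m := by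
  have hX : I.map φ ≤ Ideal.span {X} :=
    Ideal.map_le_iff_le_comap.mpr fun x hx =>
      Ideal.mem_span_singleton.mpr (X_dvd_iff.mpr (hI x hx))
  have := Ideal.pow_right_mono hX n (Ideal.map_pow φ I n ▸ Ideal.mem_map_of_mem φ hm)
  rwa [Ideal.span_singleton_pow, Ideal.mem_span_singleton] at this

end PowerSeries

theorem arcClosure_mono (k R : Type u) [Field k] [CommRing R] [Algebra k R] [IsLocalRing R]
    {𝔞 𝔟 : Ideal R} (h : 𝔞 ≤ 𝔟) : arcClosure k R 𝔞 ⊆ arcClosure k R 𝔟 :=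
  fun _ hf S _ _ φ hφ h𝔟 => hf S φ hφ fun a ha => h𝔟 a (h ha)

theorem arcClosure_eq_iInter_arcClosure_add_pow_general (k R : Type u) [Field k]
    [CommRing R] [Algebra k R] [IsLocalRing R]
    (𝔞 : Ideal R) :
    arcClosure k R 𝔞 = ⋂ (n : ℕ), arcClosure k R (𝔞 + IsLocalRing.maximalIdeal R ^ n) := by
  refine (Set.subset_iInter fun n => arcClosure_mono k R le_sup_left).antisymm ?_
  intro f hf S _ _ φ hφ h𝔞
  refine PowerSeries.ext fun i => ?_
  set ψ := (twistTrunc k (i + 1)).comp φ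
  have hψ : ∀ m ∈ IsLocalRing.maximalIdeal R, constantCoeff (ψ m) = 0 := fun m hm => by
    simp [ψ, constantCoeff_twistTrunc, hφ m hm]
  have hψ𝔞 : ∀ a ∈ 𝔞 + IsLocalRing.maximalIdeal R ^ (i + 1), ψ a = 0 := by
    intro a ha
    obtain ⟨b, hb, m, hm, rfl⟩ := Submodule.mem_sup.mp ha
    rw [map_add, AlgHom.comp_apply, h𝔞 b hb, map_zero, zero_add, AlgHom.comp_apply,
      twistTrunc_eq_zero_iff]
    exact X_pow_dvd_of_mem_pow φ.toRingHom hφ hm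
  have hdvd := twistTrunc_eq_zero_iff.mp (Set.mem_iInter.mp hf (i + 1) _ ψ hψ hψ𝔞)
  exact PowerSeries.X_pow_dvd_iff.mp hdvd i i.lt_succ_self

/-- For an ideal `𝔞 ⊆ 𝔪` of a local `k`-algebra `(R, 𝔪)`, the arc closure satisfies
`𝔞^ac = ⋂ₙ (𝔞 + 𝔪ⁿ)^ac`. -/
theorem arcClosure_eq_iInter_arcClosure_add_pow (k R : Type u) [Field k]
    [CommRing R] [Algebra k R] [IsLocalRing R]
    (𝔞 : Ideal R) (h𝔞 : 𝔞 ≤ IsLocalRing.maximalIdeal R) :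
    arcClosure k R 𝔞 = ⋂ (n : ℕ), arcClosure k R (𝔞 + IsLocalRing.maximalIdeal R ^ n) :=
  arcClosure_eq_iInter_arcClosure_add_pow_general k R 𝔞
end

section
/- Let k be a field, (R, 𝔪) a local k-algebra, and 𝔞 an ideal contained in 𝔪. Then the arc closure equals the intersection of all finite jet closures: 𝔞^ac = ⋂_{ℓ ≥ 0} 𝔞^{jc_ℓ}. -/
/-!
A based arc `φ : R → S[[t]]` is determined by its truncations `R → S[t]/(t^(ℓ+1))`, which are
based `ℓ`-jets killing `𝔞` whenever `φ` does; so `⋂ ℓ, 𝔞^{jc_ℓ} ⊆ 𝔞^ac`. Conversely, a based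
`ℓ`-jet with coefficients in `S` becomes a based arc with coefficients in the jet algebra
`A = S[x]/(x^(ℓ+1))` after composing with `A → A[t] ⊆ A[[t]]`, `x ↦ x t`; this map is injective,
since evaluation at `t = 1` is a retraction, so `𝔞^ac ⊆ 𝔞^{jc_ℓ}`.
-/

open PowerSeries

universe u

section JetAlgebra

variable (S : Type*) [CommRing S] (n : ℕ)

abbrev JetAlgebra : Type _ :=
  Polynomial S ⧸ Ideal.span {(Polynomial.X : Polynomial S) ^ (n + 1)}

theorem JetAlgebra.mk_trunc_coe (p : Polynomial S) :
    (Ideal.Quotient.mk _ (trunc (n + 1) (p : PowerSeries S)) : JetAlgebra S n) =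
      Ideal.Quotient.mk _ p := by
  rw [Ideal.Quotient.eq, Ideal.mem_span_singleton, Polynomial.X_pow_dvd_iff]
  intro d hd
  simp [coeff_trunc, hd, Polynomial.coeff_coe]

noncomputable def PowerSeries.truncJet : PowerSeries S →ₐ[S] JetAlgebra S n :=
  AlgHom.ofLinearMap ((Ideal.Quotient.mkₐ S _).toLinearMap ∘ₗ trunc (n + 1))
    (by simp [trunc_one])
    fun p q => by
      simp only [LinearMap.coe_comp, Function.comp_apply, AlgHom.toLinearMap_apply,
        Ideal.Quotient.mkₐ_eq_mk]
      rw [← trunc_trunc_mul_trunc, ← Polynomial.coe_mul, JetAlgebra.mk_trunc_coe, map_mul]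

theorem PowerSeries.truncJet_apply (p : PowerSeries S) :
    truncJet S n p = Ideal.Quotient.mk _ (trunc (n + 1) p) := rfl

theorem PowerSeries.truncJet_eq_zero_iff {p : PowerSeries S} :
    truncJet S n p = 0 ↔ ∀ i ≤ n, coeff i p = 0 := by
  simp [truncJet_apply, Ideal.Quotient.eq_zero_iff_mem, Ideal.mem_span_singleton,
    Polynomial.X_pow_dvd_iff, coeff_trunc]

theorem PowerSeries.truncJet_mem_span_X {p : PowerSeries S} (hp : constantCoeff p = 0) :
    truncJet S n p ∈ Ideal.span {Ideal.Quotient.mk _ Polynomial.X} := by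
  obtain ⟨q, rfl⟩ := X_dvd_iff.mpr hp
  have : truncJet S n X = Ideal.Quotient.mk _ Polynomial.X := by
    rw [truncJet_apply, ← Polynomial.coe_X, JetAlgebra.mk_trunc_coe]
  rw [map_mul, this]
  exact Ideal.mul_mem_right _ _ (Ideal.subset_span rfl)

noncomputable def JetAlgebra.toPolynomial : JetAlgebra S n →ₐ[S] Polynomial (JetAlgebra S n) :=
  Ideal.Quotient.liftₐ _
    (Polynomial.aeval (Polynomial.C (Ideal.Quotient.mk _ Polynomial.X) * Polynomial.X)) <| by
      rintro _ ha
      obtain ⟨c, rfl⟩ := Ideal.mem_span_singleton'.mp ha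
      have hX : (Ideal.Quotient.mk _ Polynomial.X : JetAlgebra S n) ^ (n + 1) = 0 := by
        rw [← map_pow, Ideal.Quotient.eq_zero_iff_mem]
        exact Ideal.mem_span_singleton_self _
      rw [map_mul, map_pow, Polynomial.aeval_X, mul_pow (M := Polynomial (JetAlgebra S n)),
        ← map_pow, hX, map_zero, zero_mul, mul_zero]

theorem JetAlgebra.toPolynomial_mk_X :
    toPolynomial S n (Ideal.Quotient.mk _ Polynomial.X) =
      Polynomial.C (Ideal.Quotient.mk _ Polynomial.X) * Polynomial.X :=
  Polynomial.aeval_X _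

theorem JetAlgebra.eval_one_toPolynomial (a : JetAlgebra S n) :
    (toPolynomial S n a).eval 1 = a := by
  have : ((Polynomial.aeval (1 : JetAlgebra S n)).restrictScalars S).comp (toPolynomial S n) =
      AlgHom.id S _ := by
    apply Ideal.Quotient.algHom_ext
    apply Polynomial.algHom_ext
    simp [toPolynomial_mk_X]
  exact congr($this a)

noncomputable def JetAlgebra.toArc : JetAlgebra S n →ₐ[S] PowerSeries (JetAlgebra S n) :=
  ((Polynomial.coeToPowerSeries.algHom (JetAlgebra S n)).restrictScalars S).comp
    (toPolynomial S n)

theorem JetAlgebra.toArc_apply (a : JetAlgebra S n) :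
    toArc S n a = (toPolynomial S n a : PowerSeries (JetAlgebra S n)) := by
  simp [toArc, Polynomial.coeToPowerSeries.algHom_apply]

theorem JetAlgebra.toArc_injective : Function.Injective (toArc S n) := by
  intro a b h
  rw [toArc_apply, toArc_apply] at h
  rw [← eval_one_toPolynomial S n a, ← eval_one_toPolynomial S n b,
    Polynomial.coe_injective _ h]

theorem JetAlgebra.constantCoeff_toArc {a : JetAlgebra S n}
    (ha : a ∈ Ideal.span {Ideal.Quotient.mk _ Polynomial.X}) :
    constantCoeff (toArc S n a) = 0 := by
  obtain ⟨c, rfl⟩ := Ideal.mem_span_singleton'.mp ha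
  simp [toArc, toPolynomial_mk_X]

end JetAlgebra

section Closures

variable (k R : Type u) [Field k] [CommRing R] [Algebra k R] [IsLocalRing R] (𝔞 : Ideal R)

theorem arcClosure_subset_jetClosure (ℓ : ℕ) : arcClosure k R 𝔞 ⊆ jetClosure k R ℓ 𝔞 := by
  intro f hf S _ _ φ hφ_based hφ_kill
  apply JetAlgebra.toArc_injective S ℓ
  simpa using hf _ (((JetAlgebra.toArc S ℓ).restrictScalars k).comp φ)
    (fun m hm => JetAlgebra.constantCoeff_toArc S ℓ (hφ_based m hm))
    (fun a ha => by simp [hφ_kill a ha])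

theorem iInter_jetClosure_subset_arcClosure : ⋂ ℓ, jetClosure k R ℓ 𝔞 ⊆ arcClosure k R 𝔞 := by
  intro f hf S _ _ φ hφ_based hφ_kill
  ext j
  have hj := Set.mem_iInter.mp hf j S (((truncJet S j).restrictScalars k).comp φ)
    (fun m hm => truncJet_mem_span_X S j (hφ_based m hm))
    (fun a ha => by simp [hφ_kill a ha])
  exact (truncJet_eq_zero_iff S j).mp hj j le_rfl

end Closures

theorem arcClosure_eq_iInter_jetClosure_general (k R : Type u) [Field k] [CommRing R] [Algebra k R]
    [IsLocalRing R] (𝔞 : Ideal R) :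
    arcClosure k R 𝔞 = ⋂ (ℓ : ℕ), jetClosure k R ℓ 𝔞 :=
  (Set.subset_iInter (arcClosure_subset_jetClosure k R 𝔞)).antisymm
    (iInter_jetClosure_subset_arcClosure k R 𝔞)

/-- The arc closure of an ideal `𝔞 ⊆ 𝔪` of a local `k`-algebra equals the intersection of
all the finite jet closures: `𝔞^ac = ⋂_ℓ 𝔞^{jc_ℓ}`. -/
theorem arcClosure_eq_iInter_jetClosure (k R : Type u) [Field k] [CommRing R] [Algebra k R]
    [IsLocalRing R] (𝔞 : Ideal R) (h𝔞 : 𝔞 ≤ IsLocalRing.maximalIdeal R) :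
    arcClosure k R 𝔞 = ⋂ (ℓ : ℕ), jetClosure k R ℓ 𝔞 :=
  arcClosure_eq_iInter_jetClosure_general k R 𝔞
end
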